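/- Let p be a prime, n a positive integer, and 1 ≤ m ≤ n−1. For a function f : 𝔽_p^n → 𝔽_p, the polynomial z^{p^m} − 1 divides the associated polynomial F(z) in ℂ[z] if and only if f is balanced on every fiber obtained by fixing the first m variables; that is, for every (a_1,...,a_m) ∈ 𝔽_p^m and every t ∈ 𝔽_p, #{x ∈ 𝔽_p^n : f(x) = t and x_i = a_i for 1 ≤ i ≤ m} = p^{n−m−1}. -/

import Mathlib

/-- `ω = exp(2π√-1/p)`, a primitive `p`-th root of unity in `ℂ`. -/
noncomputable def omegaC (p : ℕ) : ℂ := Complex.exp (2 * Real.pi * Complex.I / p)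

/-- `ξ = exp(2π√-1/pⁿ)`, a primitive `pⁿ`-th root of unity in `ℂ`. -/
noncomputable def xiC (p n : ℕ) : ℂ := Complex.exp (2 * Real.pi * Complex.I / (p ^ n : ℕ))

/-- The integer `k = Σ_{i=1}^n x_i p^{i-1}` whose `p`-adic digits are `x₁,…,xₙ`
(0-indexed here). -/
def idx {p n : ℕ} (x : Fin n → ZMod p) : ℕ := ∑ i : Fin n, (x i).val * p ^ (i : ℕ)

/-- The associated polynomial `F(z) = Σ_{k=0}^{pⁿ-1} ω^{f(k)} z^k
  = Σ_{x ∈ 𝔽ₚⁿ} ω^{f(x)} z^{idx x} ∈ ℂ[z]`. -/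
noncomputable def assocPoly {p n : ℕ} [NeZero p] (f : (Fin n → ZMod p) → ZMod p) :
    Polynomial ℂ :=
  ∑ x : Fin n → ZMod p, Polynomial.monomial (idx x) (omegaC p ^ (f x).val)

/-- Discrete Fourier transform over ℂ: `𝔉_f(j) = Σ_{k=0}^{pⁿ-1} ω^{f(k)} ξ^{-kj}`. -/
noncomputable def dft {p n : ℕ} [NeZero p] (f : (Fin n → ZMod p) → ZMod p) (j : ℕ) : ℂ :=
  ∑ x : Fin n → ZMod p, omegaC p ^ (f x).val * xiC p n ^ (-((idx x * j : ℕ) : ℤ))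

/-- `f` is `m`-th order correlation-immune: for every `m`-subset `S` of the variable
indices, every assignment `a` of values on `S` and every `t`,
`p^m ⬝ #{x : f x = t ∧ x∣_S = a∣_S} = #{x : f x = t}`. -/
def CorrImmune {p n : ℕ} [NeZero p] (f : (Fin n → ZMod p) → ZMod p) (m : ℕ) : Prop :=
  ∀ S : Finset (Fin n), S.card = m → ∀ a : Fin n → ZMod p, ∀ t : ZMod p,
    p ^ m * (Finset.univ.filter fun x : Fin n → ZMod p =>
        f x = t ∧ ∀ i ∈ S, x i = a i).card
      = (Finset.univ.filter fun x : Fin n → ZMod p => f x = t).card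

/-- `f` is balanced: every output value is attained exactly `p^{n-1}` times. -/
def IsBalanced {p n : ℕ} [NeZero p] (f : (Fin n → ZMod p) → ZMod p) : Prop :=
  ∀ t : ZMod p,
    (Finset.univ.filter fun x : Fin n → ZMod p => f x = t).card = p ^ (n - 1)

/-- `f` is `m`-resilient: `m`-th order correlation-immune and balanced. -/
def Resilient {p n : ℕ} [NeZero p] (f : (Fin n → ZMod p) → ZMod p) (m : ℕ) : Prop :=
  CorrImmune f m ∧ IsBalanced f


/-! Reducing exponents modulo `N = p ^ m` does not change a polynomial modulo `X ^ N - 1`, and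
the reduced polynomial has degree `< N`; so `X ^ N - 1` divides `∑ cᵢ X ^ eᵢ` iff the coefficients
in every residue class of exponents sum to `0`. Since `idx x % p ^ m` is the index of the first `m`
digits of `x`, these classes are the fibers of the first `m` variables, and the condition reads
`∑_{x in the fiber} ω ^ f(x) = 0`. The minimal polynomial of `ω` over `ℚ` is
`1 + X + ⋯ + X ^ (p - 1)`, so `∑ₜ cₜ ω ^ t = 0` with rational `cₜ` forces all `cₜ` to be equal:
`f` takes every value equally often on the fiber. -/

open Polynomial Finset

section FoldModulo

variable {R : Type*}

theorem X_pow_sub_one_dvd_X_pow_sub_X_pow_mod [CommRing R] (N a : ℕ) :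
    (X ^ N - 1 : R[X]) ∣ X ^ a - X ^ (a % N) := by
  have hsplit : (X ^ a - X ^ (a % N) : R[X]) = X ^ (a % N) * (X ^ (N * (a / N)) - 1) := by
    rw [mul_sub, mul_one, ← pow_add, Nat.mod_add_div]
  rw [hsplit]
  exact dvd_mul_of_dvd_right (pow_one_sub_dvd_pow_mul_sub_one X N (a / N)) _

theorem X_pow_sub_one_dvd_sum_monomial_iff [Field R] {ι : Type*} (s : Finset ι) (e : ι → ℕ)
    (c : ι → R) {N : ℕ} (hN : 0 < N) :
    (X ^ N - 1 : R[X]) ∣ ∑ i ∈ s, monomial (e i) (c i) ↔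
      ∀ r, ∑ i ∈ s with e i % N = r, c i = 0 := by
  set G : R[X] := ∑ i ∈ s, monomial (e i % N) (c i)
  have hfold : (X ^ N - 1 : R[X]) ∣ ∑ i ∈ s, monomial (e i) (c i) - G := by
    rw [← sum_sub_distrib]
    refine dvd_sum fun i _ => ?_
    rw [← C_mul_X_pow_eq_monomial, ← C_mul_X_pow_eq_monomial, ← mul_sub]
    exact dvd_mul_of_dvd_right (X_pow_sub_one_dvd_X_pow_sub_X_pow_mod N (e i)) _
  have hcoeff (r : ℕ) : G.coeff r = ∑ i ∈ s with e i % N = r, c i := by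
    simp only [G, finsetSum_coeff, coeff_monomial, sum_filter]
  have hdeg : G.degree < (X ^ N - 1 : R[X]).degree := by
    rw [← C_1, degree_X_pow_sub_C hN]
    refine (degree_lt_iff_coeff_zero G N).mpr fun r hr => ?_
    rw [hcoeff]
    refine sum_eq_zero fun i hi => ?_
    have := Nat.mod_lt (e i) hN
    simp only [mem_filter] at hi
    omega
  rw [dvd_iff_dvd_of_dvd_sub hfold]
  constructor
  · intro h r
    rw [← hcoeff, eq_zero_of_dvd_of_degree_lt h hdeg, coeff_zero]
  · intro h
    rw [show G = 0 from ext fun r => by rw [hcoeff, h, coeff_zero]]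
    exact dvd_zero _

end FoldModulo

section Digits

variable {p : ℕ}

theorem idx_succ {n : ℕ} (x : Fin (n + 1) → ZMod p) :
    idx x = (x 0).val + p * idx (Fin.tail x) := by
  simp only [idx, Fin.sum_univ_succ, Fin.val_zero, pow_zero, mul_one, Fin.val_succ, pow_succ',
    mul_sum, Fin.tail]
  congr 1
  exact sum_congr rfl fun i _ => by ring

theorem idx_append {m k : ℕ} (a : Fin m → ZMod p) (y : Fin k → ZMod p) :
    idx (Fin.append a y) = idx a + p ^ m * idx y := by
  simp only [idx, Fin.sum_univ_add, Fin.append_left, Fin.append_right, Fin.val_castAdd,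
    Fin.val_natAdd, pow_add, mul_sum]
  congr 1
  exact sum_congr rfl fun i _ => by ring

variable [NeZero p]

theorem idx_lt : ∀ {n : ℕ} (x : Fin n → ZMod p), idx x < p ^ n
  | 0, _ => by simp [idx]
  | n + 1, x => by
    have h0 := ZMod.val_lt (x 0)
    have htail := idx_lt (Fin.tail x)
    rw [idx_succ, pow_succ']
    nlinarith

theorem idx_injective : ∀ {n : ℕ}, Function.Injective (idx : (Fin n → ZMod p) → ℕ)
  | 0, x, y, _ => Subsingleton.elim x y
  | n + 1, x, y, h => by
    have hp : 0 < p := Nat.pos_of_neZero p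
    rw [idx_succ, idx_succ] at h
    have hx0 := ZMod.val_lt (x 0)
    have hy0 := ZMod.val_lt (y 0)
    have hhead : (x 0).val = (y 0).val := by
      simpa [Nat.add_mul_mod_self_left, Nat.mod_eq_of_lt hx0, Nat.mod_eq_of_lt hy0] using
        congrArg (· % p) h
    have htail : idx (Fin.tail x) = idx (Fin.tail y) := by
      simpa [Nat.add_mul_div_left _ _ hp, Nat.div_eq_of_lt hx0, Nat.div_eq_of_lt hy0] using
        congrArg (· / p) h
    rw [← Fin.cons_self_tail x, ← Fin.cons_self_tail y, ZMod.val_injective p hhead,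
      idx_injective htail]

theorem idx_take {m n : ℕ} (h : m ≤ n) (x : Fin n → ZMod p) :
    idx (Fin.take m h x) = idx x % p ^ m := by
  obtain ⟨k, rfl⟩ := Nat.exists_eq_add_of_le h
  conv_rhs => rw [← Fin.append_castAdd_natAdd (f := x), idx_append]
  rw [Nat.add_mul_mod_self_left, Nat.mod_eq_of_lt (idx_lt _)]
  rfl

end Digits

theorem card_filter_take_eq {α : Type*} [Fintype α] [DecidableEq α] {m n : ℕ} (h : m ≤ n)
    (a : Fin m → α) : #{x : Fin n → α | Fin.take m h x = a} = Fintype.card α ^ (n - m) := by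
  obtain ⟨k, rfl⟩ := Nat.exists_eq_add_of_le h
  have hfiber : ({x : Fin (m + k) → α | Fin.take m h x = a} : Finset _) = univ.image (Fin.append a) := by
    ext x
    simp only [mem_filter, mem_univ, true_and, mem_image]
    constructor
    · rintro rfl
      exact ⟨_, Fin.append_castAdd_natAdd⟩
    · rintro ⟨y, -, rfl⟩
      exact funext fun i => Fin.append_left a y i
  have hinj : Function.Injective (Fin.append a : (Fin k → α) → _) := fun y y' hy =>
    funext fun i => by simpa using congrFun hy (Fin.natAdd m i)
  rw [hfiber, card_image_of_injective _ hinj, card_univ, Fintype.card_fun, Fintype.card_fin,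
    Nat.add_sub_cancel_left]

theorem forall_sum_filter_comp_eq_zero_iff {ι α β M : Type*} [AddCommMonoid M] [DecidableEq α]
    [DecidableEq β] {φ : α → β} (hφ : Function.Injective φ) (s : Finset ι) (π : ι → α)
    (g : ι → M) :
    (∀ b, ∑ i ∈ s with φ (π i) = b, g i = 0) ↔ ∀ a, ∑ i ∈ s with π i = a, g i = 0 := by
  refine ⟨fun h a => by simpa only [hφ.eq_iff] using h (φ a), fun h b => ?_⟩
  by_cases hb : ∃ a, φ a = b
  · obtain ⟨a, rfl⟩ := hb
    simpa only [hφ.eq_iff] using h a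
  · exact sum_eq_zero fun i hi => absurd ⟨π i, (mem_filter.1 hi).2⟩ hb

section RootsOfUnity

variable {K : Type*} [Field K] [CharZero K] {p : ℕ} [hp : Fact p.Prime] {ω : K}

theorem IsPrimitiveRoot.sum_mul_pow_val_eq_zero_iff (hω : IsPrimitiveRoot ω p)
    (c : ZMod p → ℚ) : ∑ t : ZMod p, (c t : K) * ω ^ t.val = 0 ↔ ∀ t, c t = c 0 := by
  constructor
  · intro hsum
    set Q : ℚ[X] := ∑ t : ZMod p, C (c t) * X ^ t.val
    have hcoeff (t : ZMod p) : Q.coeff t.val = c t := by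
      simp only [Q, finsetSum_coeff, coeff_C_mul_X_pow]
      rw [sum_eq_single t (fun s _ hst => if_neg fun h => hst (ZMod.val_injective p h).symm)
        (by simp), if_pos rfl]
    have hroot : aeval ω Q = 0 := by
      simpa only [Q, map_sum, map_mul, map_pow, aeval_C, aeval_X, eq_ratCast] using hsum
    have hdvd : cyclotomic p ℚ ∣ Q := by
      rw [cyclotomic_eq_minpoly_rat hω hp.out.pos]
      exact minpoly.dvd ℚ ω hroot
    have hdeg : Q.natDegree ≤ (cyclotomic p ℚ).natDegree := by
      rw [natDegree_cyclotomic, Nat.totient_prime hp.out]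
      refine natDegree_sum_le_of_forall_le _ _ fun t _ => (natDegree_C_mul_X_pow_le _ _).trans ?_
      exact Nat.le_sub_one_of_lt (ZMod.val_lt t)
    have hQ := eq_leadingCoeff_mul_of_monic_of_dvd_of_natDegree_le (cyclotomic.monic p ℚ) hdvd hdeg
    have hcyc (t : ZMod p) : (cyclotomic p ℚ).coeff t.val = 1 := by
      simp [cyclotomic_prime, finsetSum_coeff, coeff_X_pow, ZMod.val_lt t]
    intro t
    rw [← hcoeff t, ← hcoeff 0, hQ, coeff_C_mul, coeff_C_mul, hcyc, hcyc]
  · intro hconst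
    -- `ZMod (k + 1)` is `Fin (k + 1)` by definition, which turns the sum into a geometric sum.
    obtain ⟨k, rfl⟩ : ∃ k, p = k + 1 := Nat.exists_eq_add_one.mpr hp.out.pos
    have hgeom : ∑ t : ZMod (k + 1), ω ^ t.val = 0 :=
      (Fin.sum_univ_eq_sum_range (ω ^ ·) _).trans (hω.geom_sum_eq_zero hp.out.one_lt)
    simp only [hconst _, ← mul_sum, hgeom, mul_zero]

theorem IsPrimitiveRoot.sum_pow_val_eq_zero_iff_card_fiber_eq
    (hω : IsPrimitiveRoot ω p) {α : Type*} (s : Finset α) (f : α → ZMod p) {k : ℕ}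
    (hs : #s = p ^ (k + 1)) :
    ∑ x ∈ s, ω ^ (f x).val = 0 ↔ ∀ t, #{x ∈ s | f x = t} = p ^ k := by
  set c : ZMod p → ℕ := fun t => #{x ∈ s | f x = t}
  have hsum : ∑ x ∈ s, ω ^ (f x).val = ∑ t, ((c t : ℚ) : K) * ω ^ t.val := by
    rw [← sum_fiberwise s f]
    refine sum_congr rfl fun t _ => ?_
    rw [sum_congr rfl fun x hx => by rw [(mem_filter.1 hx).2], sum_const, nsmul_eq_mul,
      Rat.cast_natCast]
  have htotal : ∑ t, c t = p ^ (k + 1) := by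
    rw [← hs, card_eq_sum_card_fiberwise fun x _ => mem_univ (f x)]
  rw [hsum, hω.sum_mul_pow_val_eq_zero_iff]
  simp only [Nat.cast_inj]
  refine ⟨fun hconst t => ?_, fun h t => (h t).trans (h 0).symm⟩
  have hc0 : p * c 0 = p * p ^ k := by
    rw [← pow_succ', ← htotal, sum_congr rfl fun t _ => hconst t, sum_const, card_univ,
      ZMod.card, smul_eq_mul]
  show c t = p ^ k
  rw [hconst t]
  exact Nat.eq_of_mul_eq_mul_left hp.out.pos hc0

end RootsOfUnity

/-- `z^{p^m} - 1 ∣ F(z)` iff `f` is balanced on every fiber obtained by fixing the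
first `m` variables: for every `(a₁,…,a_m)` and every `t`,
`#{x : f x = t ∧ xᵢ = aᵢ for 1 ≤ i ≤ m} = p^{n-m-1}`. -/
theorem pow_sub_one_dvd_assocPoly_iff_balanced_fibers
    (p n m : ℕ) [Fact p.Prime] (hn : 0 < n) (hmn : m ≤ n - 1)
    (f : (Fin n → ZMod p) → ZMod p) :
    (Polynomial.X ^ (p ^ m) - 1 : Polynomial ℂ) ∣ assocPoly f ↔
      ∀ a : Fin m → ZMod p, ∀ t : ZMod p,
        (Finset.univ.filter fun x : Fin n → ZMod p =>
            f x = t ∧ ∀ i : Fin m, x (Fin.castLE (by omega) i) = a i).card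
          = p ^ (n - m - 1) := by
  have hmn' : m ≤ n := by omega
  have hω : IsPrimitiveRoot (omegaC p) p := Complex.isPrimitiveRoot_exp p (NeZero.ne p)
  rw [assocPoly, X_pow_sub_one_dvd_sum_monomial_iff _ _ _ (pow_pos (NeZero.pos p) m)]
  simp only [← idx_take hmn']
  rw [forall_sum_filter_comp_eq_zero_iff idx_injective]
  refine forall_congr' fun a => ?_
  have hcard : #{x : Fin n → ZMod p | Fin.take m hmn' x = a} = p ^ (n - m - 1 + 1) := by
    rw [card_filter_take_eq, ZMod.card]
    congr 1
    omega
  rw [hω.sum_pow_val_eq_zero_iff_card_fiber_eq _ f hcard]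
  refine forall_congr' fun t => ?_
  have hfiber (x : Fin n → ZMod p) : (Fin.take m hmn' x = a ∧ f x = t) ↔
      (f x = t ∧ ∀ i : Fin m, x (Fin.castLE hmn' i) = a i) := by
    rw [and_comm, funext_iff]
    rfl
  rw [filter_filter, filter_congr fun x _ => hfiber x]
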